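/- In a parallel system under the local metric with perfect repairs, equal repair costs C_{R,i} = C_R > 0 for all components, and equal inspection error rates for all components, if p_i ≤ p_j (and 0 < h_i < 1, 0 < h_j < 1) then VoI_L(i) ≥ VoI_L(j); i.e. the local metric also gives highest priority to the most reliable component, consistently with the global metric. -/

import Mathlib

/-!
Repairing a single component already secures a parallel system, so under any belief the optimal
expected loss is `min (CF * q) CR`, with `q` the probability that every component has failed.
Weighted by the probability `h` of the outcome, the posterior local loss of inspecting a component
is therefore `min ((1 - εFS) * CF * Q) (CR * h) + min (εFS * CF * Q) (CR * (1 - h))`, where `Q` is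
the prior probability of system failure (a failed system has every component failed, so the
outcome is emitted with the failed-state rates). Only `h = εFA + (1 - εFS - εFA) * p` depends on
the component, it grows with `p`, and the loss is nondecreasing in `h` on `h ≤ 1 - εFS`.
-/

open scoped Classical

/-- Probability of an event `E` under weights `w` on a finite outcome space. -/
noncomputable def Pr {Ω : Type*} [Fintype Ω] (w : Ω → ℝ) (E : Ω → Prop) : ℝ :=
  ∑ ω ∈ Finset.univ.filter E, w ω

/-- Conditional probability `P[A | B]`. -/
noncomputable def cPr {Ω : Type*} [Fintype Ω] (w : Ω → ℝ) (A B : Ω → Prop) : ℝ :=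
  Pr w (fun ω => A ω ∧ B ω) / Pr w B

/-- Conditional expectation `E[f | B]` (expectation of `f` under the posterior given `B`). -/
noncomputable def cExp {Ω : Type*} [Fintype Ω] (w : Ω → ℝ) (f : Ω → ℝ) (B : Ω → Prop) : ℝ :=
  (∑ ω ∈ Finset.univ.filter B, w ω * f ω) / Pr w B

/-- Total maintenance loss for a parallel system under the local metric: repairing each
component costs `CR` (perfect repairs), and since repairing any single component guarantees
system functioning, the failure cost `CF` is paid iff no component is repaired and every
component is failed. -/
noncomputable def parallelLoss {Ω : Type*} {N : ℕ} (CR CF : ℝ) (s : Ω → Fin N → Bool)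
    (A : Fin N → Bool) (ω : Ω) : ℝ :=
  CR * (∑ k, if A k = true then 1 else 0)
    + CF * (if (∀ k, A k = false) ∧ (∀ k, s ω k = false) then 1 else 0)

section Probability

variable {Ω : Type*} [Fintype Ω] {w : Ω → ℝ}

lemma Pr_nonneg (hw0 : ∀ ω, 0 ≤ w ω) (E : Ω → Prop) : 0 ≤ Pr w E :=
  Finset.sum_nonneg fun ω _ => hw0 ω

lemma Pr_congr {E F : Ω → Prop} (h : ∀ ω, E ω ↔ F ω) : Pr w E = Pr w F := by
  simp only [Pr, h]

lemma Pr_eq_zero_of_forall_not {E : Ω → Prop} (h : ∀ ω, ¬E ω) : Pr w E = 0 := by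
  simp [Pr, h]

lemma Pr_mono (hw0 : ∀ ω, 0 ≤ w ω) {E F : Ω → Prop} (h : ∀ ω, E ω → F ω) :
    Pr w E ≤ Pr w F :=
  Finset.sum_le_sum_of_subset_of_nonneg (Finset.monotone_filter_right _ fun ω _ => h ω)
    fun ω _ _ => hw0 ω

lemma Pr_true (hw1 : ∑ ω, w ω = 1) : Pr w (fun _ => True) = 1 := by
  simpa [Pr] using hw1

lemma Pr_le_one (hw0 : ∀ ω, 0 ≤ w ω) (hw1 : ∑ ω, w ω = 1) (E : Ω → Prop) : Pr w E ≤ 1 :=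
  Pr_true hw1 ▸ Pr_mono hw0 fun _ _ => trivial

lemma Pr_and_add_Pr_and_not (E A : Ω → Prop) :
    Pr w (fun ω => E ω ∧ A ω) + Pr w (fun ω => E ω ∧ ¬A ω) = Pr w E := by
  rw [Pr, Pr, Pr, ← Finset.sum_filter_add_sum_filter_not (Finset.univ.filter E) A,
    Finset.filter_filter, Finset.filter_filter]
  congr! 3

lemma Pr_not (hw1 : ∑ ω, w ω = 1) (A : Ω → Prop) : Pr w (fun ω => ¬A ω) = 1 - Pr w A := by
  have := Pr_and_add_Pr_and_not (w := w) (fun _ => True) A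
  simp only [true_and] at this
  linarith [Pr_true hw1 (w := w)]

lemma Pr_eq_sum_fiber {α : Type*} [Fintype α] (s : Ω → α) (E : Ω → Prop) :
    Pr w E = ∑ σ, Pr w (fun ω => E ω ∧ s ω = σ) := by
  rw [Pr, ← Finset.sum_fiberwise_of_maps_to (fun ω _ => Finset.mem_univ (s ω)) w]
  simp only [Pr, Finset.filter_filter]
  congr! 3

lemma Pr_and_eq_mul_of_cPr (hw0 : ∀ ω, 0 ≤ w ω) {A B : Ω → Prop} {c : ℝ}
    (h : 0 < Pr w B → cPr w A B = c) : Pr w (fun ω => A ω ∧ B ω) = c * Pr w B := by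
  rcases (Pr_nonneg hw0 B).lt_or_eq with hB | hB
  · rw [← h hB, cPr, div_mul_cancel₀ _ hB.ne']
  · rw [← hB, mul_zero]
    exact le_antisymm (hB ▸ Pr_mono hw0 fun _ h => h.2) (Pr_nonneg hw0 _)

lemma Pr_and_eq_mul_of_fiber {α : Type*} [Fintype α] (s : Ω → α) {A : Ω → Prop}
    {S : α → Prop} {c : ℝ}
    (h : ∀ σ, S σ → Pr w (fun ω => A ω ∧ s ω = σ) = c * Pr w (fun ω => s ω = σ)) :
    Pr w (fun ω => A ω ∧ S (s ω)) = c * Pr w (fun ω => S (s ω)) := by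
  rw [Pr_eq_sum_fiber s, Pr_eq_sum_fiber s (fun ω => S (s ω)), Finset.mul_sum]
  refine Finset.sum_congr rfl fun σ _ => ?_
  by_cases hσ : S σ
  · have hA : Pr w (fun ω => (A ω ∧ S (s ω)) ∧ s ω = σ) = Pr w (fun ω => A ω ∧ s ω = σ) :=
      Pr_congr fun ω => ⟨fun h => ⟨h.1.1, h.2⟩, fun h => ⟨⟨h.1, h.2 ▸ hσ⟩, h.2⟩⟩
    have hS : Pr w (fun ω => S (s ω) ∧ s ω = σ) = Pr w (fun ω => s ω = σ) :=
      Pr_congr fun ω => ⟨And.right, fun h => ⟨h ▸ hσ, h⟩⟩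
    rw [hA, hS, h σ hσ]
  · rw [Pr_eq_zero_of_forall_not fun ω (h : (A ω ∧ S (s ω)) ∧ s ω = σ) => hσ (h.2 ▸ h.1.2),
      Pr_eq_zero_of_forall_not fun ω (h : S (s ω) ∧ s ω = σ) => hσ (h.2 ▸ h.1), mul_zero]

end Probability

/-- The emission law in joint form, which stays meaningful on null fibres `s = σ`, where `cPr`
divides by zero. -/
def IsInspectionOf {Ω : Type*} [Fintype Ω] {N : ℕ} (w : Ω → ℝ) (s : Ω → Fin N → Bool) (k : Fin N)
    (εFA εFS : ℝ) (r : Ω → Bool) : Prop :=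
  ∀ σ, Pr w (fun ω => r ω = false ∧ s ω = σ)
    = (if σ k = true then εFA else 1 - εFS) * Pr w (fun ω => s ω = σ)

section Inspection

variable {Ω : Type*} [Fintype Ω] {N : ℕ} {w : Ω → ℝ} {s : Ω → Fin N → Bool} {r : Ω → Bool}
  {k : Fin N} {εFA εFS : ℝ}

lemma Pr_inspect_true (hw1 : ∑ ω, w ω = 1) :
    Pr w (fun ω => r ω = true) = 1 - Pr w (fun ω => r ω = false) := by
  rw [← Pr_not hw1]
  exact Pr_congr fun ω => by simp

lemma Pr_inspect_false (hr : IsInspectionOf w s k εFA εFS r) (hw1 : ∑ ω, w ω = 1) :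
    Pr w (fun ω => r ω = false) = εFA + (1 - εFS - εFA) * Pr w (fun ω => s ω k = false) := by
  have hworking : Pr w (fun ω => r ω = false ∧ s ω k = true)
      = εFA * (1 - Pr w (fun ω => s ω k = false)) := by
    rw [Pr_and_eq_mul_of_fiber s (S := fun σ => σ k = true) fun σ hσ => by rw [hr σ, if_pos hσ],
      ← Pr_not hw1]
    exact congrArg _ (Pr_congr fun ω => by simp)
  have hfailed : Pr w (fun ω => r ω = false ∧ ¬s ω k = true)
      = (1 - εFS) * Pr w (fun ω => s ω k = false) := by
    rw [Pr_and_eq_mul_of_fiber s (S := fun σ => ¬σ k = true) fun σ hσ => by rw [hr σ, if_neg hσ]]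
    exact congrArg _ (Pr_congr fun ω => by simp)
  rw [← Pr_and_add_Pr_and_not _ fun ω => s ω k = true, hworking, hfailed]
  ring

lemma Pr_allFailed_and_inspect_false (hr : IsInspectionOf w s k εFA εFS r) :
    Pr w (fun ω => (∀ k', s ω k' = false) ∧ r ω = false)
      = (1 - εFS) * Pr w (fun ω => ∀ k', s ω k' = false) := by
  rw [← Pr_and_eq_mul_of_fiber s (S := fun σ => ∀ k', σ k' = false)
    fun σ hσ => by rw [hr σ, hσ k]; rfl]
  exact Pr_congr fun ω => and_comm

lemma Pr_allFailed_and_inspect_true (hr : IsInspectionOf w s k εFA εFS r) :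
    Pr w (fun ω => (∀ k', s ω k' = false) ∧ r ω = true)
      = εFS * Pr w (fun ω => ∀ k', s ω k' = false) := by
  have hsplit :=
    Pr_and_add_Pr_and_not (w := w) (fun ω => ∀ k', s ω k' = false) (fun ω => r ω = false)
  have hnot : Pr w (fun ω => (∀ k', s ω k' = false) ∧ ¬r ω = false)
      = Pr w (fun ω => (∀ k', s ω k' = false) ∧ r ω = true) := Pr_congr fun ω => by simp
  rw [Pr_allFailed_and_inspect_false hr, hnot] at hsplit
  linarith

end Inspection

lemma parallelLoss_eq {Ω : Type*} {N : ℕ} (CR CF : ℝ) (s : Ω → Fin N → Bool)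
    (A : Fin N → Bool) :
    parallelLoss CR CF s A = fun ω => CR * (∑ k, if A k = true then 1 else 0)
      + CF * (if ∀ k, A k = false then 1 else 0) * if ∀ k, s ω k = false then 1 else 0 := by
  ext ω
  simp only [parallelLoss, ite_and]
  split_ifs <;> ring

section Loss

variable {Ω : Type*} [Fintype Ω] {N : ℕ} {w : Ω → ℝ} {s : Ω → Fin N → Bool} {CR CF : ℝ}

lemma cExp_const_add_mul_ite {B : Ω → Prop} (hB : Pr w B ≠ 0) (a b : ℝ) (F : Ω → Prop)
    [DecidablePred F] :
    cExp w (fun ω => a + b * if F ω then 1 else 0) B = a + b * cPr w F B := by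
  have hsum : ∑ ω ∈ Finset.univ.filter B, w ω * (a + b * if F ω then 1 else 0)
      = Pr w B * a + b * Pr w (fun ω => F ω ∧ B ω) := by
    simp only [Pr, Finset.sum_filter, Finset.sum_mul, Finset.mul_sum, ← Finset.sum_add_distrib]
    refine Finset.sum_congr rfl fun ω _ => ?_
    by_cases hBω : B ω <;> by_cases hFω : F ω <;> simp [hBω, hFω, mul_add, mul_comm]
  rw [cExp, hsum, cPr]
  field_simp

lemma inf'_repairCost_add (hCR : 0 ≤ CR) (c : ℝ) (i : Fin N) :
    Finset.univ.inf' Finset.univ_nonempty (fun A : Fin N → Bool =>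
        CR * (∑ k, if A k = true then 1 else 0) + c * (if ∀ k, A k = false then 1 else 0))
      = min c CR := by
  refine le_antisymm (le_min ?_ ?_) (Finset.le_inf' _ _ fun A _ => ?_)
  · exact (Finset.inf'_le _ (Finset.mem_univ fun _ => false)).trans_eq (by simp)
  · exact (Finset.inf'_le _ (Finset.mem_univ fun k => decide (k = i))).trans_eq (by simp)
  · by_cases hA : ∀ k, A k = false
    · simp [hA]
    · obtain ⟨k, hk⟩ := not_forall.1 hA
      have hcount : 1 ≤ ∑ k, if A k = true then (1 : ℝ) else 0 :=
        calc (1 : ℝ) = if A k = true then 1 else 0 := by simpa using hk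
          _ ≤ _ := Finset.single_le_sum (f := fun j => if A j = true then (1 : ℝ) else 0)
            (fun j _ => by split_ifs <;> norm_num) (Finset.mem_univ k)
      rw [if_neg hA, mul_zero, add_zero]
      exact (min_le_right _ _).trans (le_mul_of_one_le_right hCR hcount)

lemma Pr_mul_inf'_cExp_parallelLoss (hCR : 0 ≤ CR) {B : Ω → Prop} (hB : 0 < Pr w B)
    (i : Fin N) :
    Pr w B * Finset.univ.inf' Finset.univ_nonempty
        (fun A : Fin N → Bool => cExp w (parallelLoss CR CF s A) B)
      = min (CF * Pr w (fun ω => (∀ k, s ω k = false) ∧ B ω)) (CR * Pr w B) := by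
  simp only [parallelLoss_eq, cExp_const_add_mul_ite hB.ne']
  simp only [mul_right_comm CF]
  rw [inf'_repairCost_add hCR _ i, mul_min_of_nonneg _ _ hB.le, cPr]
  congr 1
  · field_simp
  · ring

end Loss

/-- Whenever the second minimum is `CR * (1 - h)`, the first is still `CR * h`, because
`h ≤ 1 - ε`; hence the slope in `h` never becomes negative. -/
lemma monotoneOn_min_add_min {CR u ε : ℝ} (hCR : 0 ≤ CR) (hε0 : 0 ≤ ε) (hε1 : ε < 1) :
    MonotoneOn (fun h => min ((1 - ε) * u) (CR * h) + min (ε * u) (CR * (1 - h)))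
      (Set.Iic (1 - ε)) := by
  intro h _ h' hh' hle
  rw [Set.mem_Iic] at hh'
  dsimp only
  rcases le_total ((1 - ε) * u) (CR * h') with h1 | h1
  · have hu : u ≤ CR := by nlinarith
    have h2 : ε * u ≤ CR * (1 - h') := by nlinarith
    rw [min_eq_left h1, min_eq_left h2]
    exact add_le_add (min_le_left _ _) (min_le_left _ _)
  · rw [min_eq_right h1]
    rcases le_total (ε * u) (CR * (1 - h')) with h2 | h2
    · rw [min_eq_left h2]
      exact add_le_add ((min_le_right _ _).trans (mul_le_mul_of_nonneg_left hle hCR))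
        (min_le_left _ _)
    · rw [min_eq_right h2]
      linarith [min_le_right ((1 - ε) * u) (CR * h), min_le_right (ε * u) (CR * (1 - h))]

theorem parallel_local_prefers_most_reliable_general {Ω : Type*} [Fintype Ω] {N : ℕ} (w : Ω → ℝ)
    (hw0 : ∀ ω, 0 ≤ w ω) (hw1 : ∑ ω, w ω = 1)
    (s : Ω → Fin N → Bool) (y : Fin N → Ω → Bool)
    (εFA εFS : ℝ) (hFA : εFA < 1/2) (hFS0 : 0 ≤ εFS) (hFS : εFS < 1/2)
    (hemit : ∀ (k : Fin N) (σ : Fin N → Bool), 0 < Pr w (fun ω => s ω = σ) →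
      cPr w (fun ω => y k ω = false) (fun ω => s ω = σ)
        = if σ k = true then εFA else 1 - εFS)
    (CR CF : ℝ) (hCR : 0 < CR)
    (i j : Fin N)
    (hi0 : 0 < Pr w (fun ω => y i ω = false)) (hi1 : Pr w (fun ω => y i ω = false) < 1)
    (hj0 : 0 < Pr w (fun ω => y j ω = false)) (hj1 : Pr w (fun ω => y j ω = false) < 1)
    (hpij : Pr w (fun ω => s ω i = false) ≤ Pr w (fun ω => s ω j = false)) :
    (Finset.univ.inf' Finset.univ_nonempty fun A : Fin N → Bool =>
          ∑ ω, w ω * parallelLoss CR CF s A ω)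
      - (Pr w (fun ω => y j ω = false) *
          (Finset.univ.inf' Finset.univ_nonempty fun A : Fin N → Bool =>
            cExp w (parallelLoss CR CF s A) (fun ω => y j ω = false))
        + (1 - Pr w (fun ω => y j ω = false)) *
          (Finset.univ.inf' Finset.univ_nonempty fun A : Fin N → Bool =>
            cExp w (parallelLoss CR CF s A) (fun ω => y j ω = true)))
    ≤ (Finset.univ.inf' Finset.univ_nonempty fun A : Fin N → Bool =>
          ∑ ω, w ω * parallelLoss CR CF s A ω)
      - (Pr w (fun ω => y i ω = false) *
          (Finset.univ.inf' Finset.univ_nonempty fun A : Fin N → Bool =>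
            cExp w (parallelLoss CR CF s A) (fun ω => y i ω = false))
        + (1 - Pr w (fun ω => y i ω = false)) *
          (Finset.univ.inf' Finset.univ_nonempty fun A : Fin N → Bool =>
            cExp w (parallelLoss CR CF s A) (fun ω => y i ω = true))) := by
  have hjoint k σ := Pr_and_eq_mul_of_cPr hw0 (hemit k σ)
  have hij : Pr w (fun ω => y i ω = false) ≤ Pr w (fun ω => y j ω = false) := by
    rw [Pr_inspect_false (hjoint i) hw1, Pr_inspect_false (hjoint j) hw1]
    gcongr
    linarith
  have hj_le : Pr w (fun ω => y j ω = false) ≤ 1 - εFS := by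
    rw [Pr_inspect_false (hjoint j) hw1]
    nlinarith [Pr_le_one hw0 hw1 fun ω => s ω j = false]
  have hi_true : 0 < Pr w (fun ω => y i ω = true) := by rw [Pr_inspect_true hw1]; linarith
  have hj_true : 0 < Pr w (fun ω => y j ω = true) := by rw [Pr_inspect_true hw1]; linarith
  refine sub_le_sub_left ?_ _
  rw [← Pr_inspect_true (r := y i) hw1, ← Pr_inspect_true (r := y j) hw1,
    Pr_mul_inf'_cExp_parallelLoss hCR.le hi0 i, Pr_mul_inf'_cExp_parallelLoss hCR.le hi_true i,
    Pr_mul_inf'_cExp_parallelLoss hCR.le hj0 i, Pr_mul_inf'_cExp_parallelLoss hCR.le hj_true i,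
    Pr_allFailed_and_inspect_false (hjoint i), Pr_allFailed_and_inspect_true (hjoint i),
    Pr_allFailed_and_inspect_false (hjoint j), Pr_allFailed_and_inspect_true (hjoint j),
    Pr_inspect_true hw1, Pr_inspect_true hw1]
  simpa only [mul_left_comm CF] using monotoneOn_min_add_min hCR.le hFS0 (by linarith)
    (le_trans hij hj_le) hj_le hij

/-- In a parallel system under the local metric with perfect repairs, equal
repair costs `C_R > 0`, and equal inspection error rates for all components, if `p_i ≤ p_j`
(and `0 < h_i < 1`, `0 < h_j < 1`) then `VoI_L(i) ≥ VoI_L(j)`: the local metric also gives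
highest priority to the most reliable component, consistently with the global metric. -/
theorem parallel_local_prefers_most_reliable {Ω : Type*} [Fintype Ω] {N : ℕ} (w : Ω → ℝ)
    (hw0 : ∀ ω, 0 ≤ w ω) (hw1 : ∑ ω, w ω = 1)
    (s : Ω → Fin N → Bool) (y : Fin N → Ω → Bool)
    (εFA εFS : ℝ) (hFA0 : 0 ≤ εFA) (hFA : εFA < 1/2) (hFS0 : 0 ≤ εFS) (hFS : εFS < 1/2)
    (hemit : ∀ (k : Fin N) (σ : Fin N → Bool), 0 < Pr w (fun ω => s ω = σ) →
      cPr w (fun ω => y k ω = false) (fun ω => s ω = σ)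
        = if σ k = true then εFA else 1 - εFS)
    (CR CF : ℝ) (hCR : 0 < CR) (hCF : 0 < CF)
    (i j : Fin N)
    (hi0 : 0 < Pr w (fun ω => y i ω = false)) (hi1 : Pr w (fun ω => y i ω = false) < 1)
    (hj0 : 0 < Pr w (fun ω => y j ω = false)) (hj1 : Pr w (fun ω => y j ω = false) < 1)
    (hpij : Pr w (fun ω => s ω i = false) ≤ Pr w (fun ω => s ω j = false)) :
    (Finset.univ.inf' Finset.univ_nonempty fun A : Fin N → Bool =>
          ∑ ω, w ω * parallelLoss CR CF s A ω)
      - (Pr w (fun ω => y j ω = false) *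
          (Finset.univ.inf' Finset.univ_nonempty fun A : Fin N → Bool =>
            cExp w (parallelLoss CR CF s A) (fun ω => y j ω = false))
        + (1 - Pr w (fun ω => y j ω = false)) *
          (Finset.univ.inf' Finset.univ_nonempty fun A : Fin N → Bool =>
            cExp w (parallelLoss CR CF s A) (fun ω => y j ω = true)))
    ≤ (Finset.univ.inf' Finset.univ_nonempty fun A : Fin N → Bool =>
          ∑ ω, w ω * parallelLoss CR CF s A ω)
      - (Pr w (fun ω => y i ω = false) *
          (Finset.univ.inf' Finset.univ_nonempty fun A : Fin N → Bool =>
            cExp w (parallelLoss CR CF s A) (fun ω => y i ω = false))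
        + (1 - Pr w (fun ω => y i ω = false)) *
          (Finset.univ.inf' Finset.univ_nonempty fun A : Fin N → Bool =>
            cExp w (parallelLoss CR CF s A) (fun ω => y i ω = true))) :=
  parallel_local_prefers_most_reliable_general w hw0 hw1 s y εFA εFS hFA hFS0 hFS hemit CR CF hCR i
    j hi0 hi1 hj0 hj1 hpij
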